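/- Consider the labeled graph with K = 2 sources and 13 nodes V1, …, V13 whose edges are exactly: W1-edges {V1,V5}, {V2,V6}, {V3,V5}, {V3,V6}, {V5,V8}, {V6,V8}, {V7,V8}, {V4,V7}, {V11,V12}, and W2-edges {V1,V2}, {V3,V4}, {V5,V9}, {V6,V10}, {V8,V12}, {V7,V13}. Every storage code over this graph with |S| ≥ 2 satisfies |S|³ < |T|⁴; i.e., the symbol rate is strictly below 4/3. -/

import Mathlib

/-- A storage code problem over a labeled graph: `N` nodes, `K` sources, and a
symmetric labeling `t` of pairs of nodes by sources, with no self-loops. -/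
structure LabeledGraph (N K : ℕ) where
  t : Fin N → Fin N → Option (Fin K)
  symm : ∀ i j, t i j = t j i
  irrefl : ∀ i, t i i = none

/-- `V` is a storage code over `G`: from the coded symbols at the two endpoints of
any `W_k`-edge, the source symbol `W_k` can be decoded. -/
def IsStorageCode {N K : ℕ} (G : LabeledGraph N K) (S T : Type)
    (V : Fin N → (Fin K → S) → T) : Prop :=
  ∀ i j k, G.t i j = some k →
    ∃ D : T → T → S, ∀ w : Fin K → S, D (V i w) (V j w) = w k

/-- The set of source labels carried by the edges incident to node `i`. -/
def colorSet {N K : ℕ} (G : LabeledGraph N K) (i : Fin N) : Set (Fin K) :=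
  {k | ∃ j, G.t i j = some k}

/-- Node `i` is `M`-color: its incident edges carry exactly `M` distinct labels. -/
def IsMColor {N K : ℕ} (G : LabeledGraph N K) (i : Fin N) (M : ℕ) : Prop :=
  (colorSet G i).ncard = M

/-- `W_1`-edges (label `0`) of the graph of Fig. 7 (0-indexed nodes). -/
def w1edges : List (ℕ × ℕ) :=
  [(0,4),(1,5),(2,4),(2,5),(4,7),(5,7),(6,7),(3,6),(10,11)]

/-- `W_2`-edges (label `1`) of the graph of Fig. 7 (0-indexed nodes). -/
def w2edges : List (ℕ × ℕ) :=
  [(0,1),(2,3),(4,8),(5,9),(7,11),(6,12)]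

/-- The labeling of the 13-node graph of Fig. 7. -/
def tFig (i j : Fin 13) : Option (Fin 2) :=
  if (i.val, j.val) ∈ w1edges ∨ (j.val, i.val) ∈ w1edges then some 0
  else if (i.val, j.val) ∈ w2edges ∨ (j.val, i.val) ∈ w2edges then some 1
  else none

/-- The 13-node, 2-source labeled graph of Fig. 7. -/
def GFig : LabeledGraph 13 2 := ⟨tFig, by decide, by decide⟩


/-!
Suppose `|T|⁴ ≤ |S|³` and put `s = |S|`. Fix `W₁ = r` and regard every encoding as a function of
`W₂` alone (a row). Along a path `a - b - c - d` labelled `W₁, W₂, W₁`, the pair `(V_a, V_b)`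
takes disjoint sets of values on different rows, and `(V_b, V_c)` is injective on each row; so
if `(V_a, V_b)` and `(V_c, V_d)` take `n_r` and `m_r` values on row `r`, then `s ≤ n_r m_r` and
`∑ n_r, ∑ m_r ≤ |T|²`. By AM-GM this forces `n_r = m_r = √s` on every row. Consequently `V_b`
takes `√s` values on a row, determines `V_a` there, and each of its fibres meets each fibre of
`V_c`.

Chasing these relations through the paths of the graph (node `V_{i+1}` has index `i`), with
the pendant `W₂`-edges at `V5` and `V6` showing that `(V5, V6)` and `V8` determine each other,
makes `V7` constant on a row. The pendant edge `V7 - V13` then gives `s ≤ |T|`, which is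
incompatible with `|T|⁴ ≤ s³` when `s ≥ 2`.
-/

open Finset Function

section FiniteImages

variable {α β γ : Type*} {f : α → β} {g : α → γ}

def FibersMeet (f : α → β) (g : α → γ) : Prop :=
  ∀ x y, ∃ z, f z = f x ∧ g z = g y

theorem FibersMeet.mono {β' γ' : Type*} {f' : α → β'} {g' : α → γ'} (h : FibersMeet f g)
    (hf : f'.FactorsThrough f) (hg : g'.FactorsThrough g) : FibersMeet f' g' := fun x y =>
  let ⟨z, hzx, hzy⟩ := h x y
  ⟨z, hf hzx, hg hzy⟩

variable [Fintype α] [DecidableEq β] [DecidableEq γ]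

theorem Function.FactorsThrough.card_image_le (h : g.FactorsThrough f) :
    #(univ.image g) ≤ #(univ.image f) := by
  cases isEmpty_or_nonempty α
  · simp
  · have : Nonempty γ := .map g ‹_›
    obtain ⟨e, rfl⟩ := (factorsThrough_iff g).1 h
    rw [← image_image]
    exact Finset.card_image_le

theorem Function.FactorsThrough.symm_of_card_image_le (h : g.FactorsThrough f)
    (hc : #(univ.image f) ≤ #(univ.image g)) : f.FactorsThrough g := by
  intro a b hab
  have : Nonempty γ := ⟨g a⟩
  obtain ⟨e, rfl⟩ := (factorsThrough_iff g).1 h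
  rw [← image_image] at hc
  exact injOn_of_card_image_eq (le_antisymm Finset.card_image_le hc)
    (mem_image_of_mem f (mem_univ a)) (mem_image_of_mem f (mem_univ b)) hab

theorem card_le_card_image_mul_card_image (h : Injective fun a => (f a, g a)) :
    Fintype.card α ≤ #(univ.image f) * #(univ.image g) := by
  rw [← card_product, ← card_univ, ← card_image_of_injective univ h]
  refine card_le_card fun p hp => ?_
  obtain ⟨a, -, rfl⟩ := mem_image.1 hp
  exact mem_product.2 ⟨mem_image_of_mem f (mem_univ a), mem_image_of_mem g (mem_univ a)⟩

theorem fibersMeet_of_card_image_mul_le (h : Injective fun a => (f a, g a))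
    (hc : #(univ.image f) * #(univ.image g) ≤ Fintype.card α) : FibersMeet f g := by
  intro x y
  have hsurj := surjOn_of_injOn_of_card_le (s := univ) (t := univ.image f ×ˢ univ.image g)
    (fun a => (f a, g a)) (fun a _ => by simp) h.injOn (by rwa [card_product, card_univ])
  obtain ⟨z, -, hz⟩ := hsurj (show (f x, g y) ∈ univ.image f ×ˢ univ.image g by simp)
  exact ⟨z, congrArg Prod.fst hz, congrArg Prod.snd hz⟩

theorem FibersMeet.card_image_mul_le (h : FibersMeet f g) :
    #(univ.image f) * #(univ.image g) ≤ #(univ.image fun a => (f a, g a)) := by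
  rw [← card_product]
  refine card_le_card ?_
  rintro ⟨b, c⟩ hp
  simp only [mem_product, mem_image, mem_univ, true_and] at hp
  obtain ⟨⟨x, rfl⟩, ⟨y, rfl⟩⟩ := hp
  obtain ⟨z, hzx, hzy⟩ := h x y
  exact mem_image.2 ⟨z, mem_univ z, by rw [hzx, hzy]⟩

theorem card_image_eq_and_factorsThrough_and_fibersMeet {A B C D : α → β} {q : ℕ}
    (hBC : Injective fun x => (B x, C x))
    (hAB : #(univ.image fun x => (A x, B x)) ≤ q) (hDC : #(univ.image fun x => (D x, C x)) ≤ q)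
    (hα : q ^ 2 ≤ Fintype.card α) :
    #(univ.image B) = q ∧ A.FactorsThrough B ∧ FibersMeet B C := by
  have hB : #(univ.image B) ≤ q :=
    (FactorsThrough.card_image_le fun _ _ h => congrArg Prod.snd h).trans hAB
  have hC : #(univ.image C) ≤ q :=
    (FactorsThrough.card_image_le fun _ _ h => congrArg Prod.snd h).trans hDC
  have hBC_card := card_le_card_image_mul_card_image hBC
  have hBq : #(univ.image B) = q := by nlinarith
  have hpair : (fun x => (A x, B x)).FactorsThrough B :=
    FactorsThrough.symm_of_card_image_le (fun _ _ h => congrArg Prod.snd h) (hBq ▸ hAB)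
  exact ⟨hBq, fun x y h => congrArg Prod.fst (hpair h),
    fibersMeet_of_card_image_mul_le hBC (by nlinarith)⟩

end FiniteImages

section Counting

theorem forall_mul_eq_of_sq_sum_le {ι : Type*} [Fintype ι] {x : ι → ℕ} {c : ℕ}
    (h : ∀ i j, c ≤ x i * x j) (hx : (∑ i, x i) ^ 2 ≤ Fintype.card ι ^ 2 * c) (i j : ι) :
    x i * x j = c := by
  have hle : ∀ i ∈ univ, ∑ _j : ι, c ≤ ∑ j, x i * x j := fun i _ => sum_le_sum fun j _ => h i j
  have hsum : ∑ _i : ι, ∑ _j : ι, c = ∑ i, ∑ j, x i * x j := by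
    refine le_antisymm (sum_le_sum hle) ?_
    simpa [sq, sum_mul_sum, mul_assoc] using hx
  have hi := (sum_eq_sum_iff_of_le hle).1 hsum i (mem_univ i)
  exact ((sum_eq_sum_iff_of_le fun j _ => h i j).1 hi j (mem_univ j)).symm

theorem sq_eq_of_sq_le_card_sq_mul {ι : Type*} [Fintype ι] {n m : ι → ℕ} {s a : ℕ}
    (h : ∀ r, s ≤ n r * m r) (hn : ∑ r, n r ≤ a) (hm : ∑ r, m r ≤ a)
    (ha : a ^ 2 ≤ Fintype.card ι ^ 2 * s) (r : ι) : n r ^ 2 = s := by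
  -- `4s ≤ xᵢ xⱼ` for `x = n + m`, since both `xᵢ²` and `xⱼ²` are at least `4s` by AM-GM
  have hsq : ∀ r, 4 * s ≤ (n r + m r) ^ 2 := fun r => by
    nlinarith [h r, four_mul_le_sq_add (n r) (m r)]
  have hpair : ∀ i j, 4 * s ≤ (n i + m i) * (n j + m j) := by
    intro i j
    rcases le_total (n i + m i) (n j + m j) with hij | hij
    · exact (hsq i).trans (by rw [sq]; exact Nat.mul_le_mul_left _ hij)
    · exact (hsq j).trans (by rw [sq]; exact Nat.mul_le_mul_right _ hij)
  have hsum : (∑ r, (n r + m r)) ^ 2 ≤ Fintype.card ι ^ 2 * (4 * s) := by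
    calc (∑ r, (n r + m r)) ^ 2 ≤ (2 * a) ^ 2 := by
          gcongr
          rw [sum_add_distrib]
          omega
      _ ≤ Fintype.card ι ^ 2 * (4 * s) := by linarith
  have hr := forall_mul_eq_of_sq_sum_le hpair hsum r r
  have hnm : n r = m r := by nlinarith [h r]
  rw [← hnm] at hr
  nlinarith

theorem sum_card_image_le_card {R X Y : Type*} [Fintype R] [Fintype X] [Fintype Y]
    [DecidableEq Y] (P : R → X → Y) (hP : ∀ r x r' x', P r x = P r' x' → r = r') :
    ∑ r, #(univ.image (P r)) ≤ Fintype.card Y := by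
  rw [← card_biUnion]
  · exact card_le_univ _
  · intro r _ r' _ hne
    refine disjoint_left.2 fun y hy hy' => hne ?_
    obtain ⟨x, -, rfl⟩ := mem_image.1 hy
    obtain ⟨x', -, hx'⟩ := mem_image.1 hy'
    exact hP r x r' x' hx'.symm

end Counting

theorem sq_card_image_pair_eq_of_pow_four_le {R X T : Type*} [Fintype R] [Fintype X] [Fintype T]
    [DecidableEq T] {A B C D : R → X → T}
    (hAB : ∀ r x r' x', A r x = A r' x' → B r x = B r' x' → r = r')
    (hCD : ∀ r x r' x', C r x = C r' x' → D r x = D r' x' → r = r')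
    (hBC : ∀ r, Injective fun x => (B r x, C r x))
    (hT : Fintype.card T ^ 4 ≤ Fintype.card R ^ 2 * Fintype.card X) (r : R) :
    #(univ.image fun x => (A r x, B r x)) ^ 2 = Fintype.card X := by
  have hrows : ∀ P : R → X → T × T, (∀ r x r' x', P r x = P r' x' → r = r') →
      ∑ r, #(univ.image (P r)) ≤ Fintype.card T ^ 2 := fun P hP => by
    simpa [sq] using sum_card_image_le_card P hP
  refine sq_eq_of_sq_le_card_sq_mul (m := fun r => #(univ.image fun x => (C r x, D r x)))
    (fun r => ?_)
    (hrows (fun r x => (A r x, B r x)) fun r x r' x' h =>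
      hAB r x r' x' (congrArg Prod.fst h) (congrArg Prod.snd h))
    (hrows (fun r x => (C r x, D r x)) fun r x r' x' h =>
      hCD r x r' x' (congrArg Prod.fst h) (congrArg Prod.snd h))
    (by rwa [← pow_mul]) r
  exact (card_le_card_image_mul_card_image (hBC r)).trans <| Nat.mul_le_mul
    (FactorsThrough.card_image_le fun _ _ h => congrArg Prod.snd h)
    (FactorsThrough.card_image_le fun _ _ h => congrArg Prod.fst h)

theorem factorsThrough_pair_of_pendants {α T : Type*} [Fintype α] [Fintype T] [DecidableEq T]
    {u v w pu pv : α → T} {q : ℕ}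
    (hu : Injective fun x => (u x, pu x)) (hv : Injective fun x => (v x, pv x))
    (huv : FibersMeet u v) (huw : u.FactorsThrough w) (hvw : v.FactorsThrough w)
    (hw : #(univ.image w) ≤ q) (hα : q ^ 2 ≤ Fintype.card α)
    (hT : Fintype.card T ^ 2 ≤ q ^ 3) (hq : 0 < q) :
    w.FactorsThrough fun x => (u x, v x) := by
  have hpair : (fun x => (u x, v x)).FactorsThrough w := fun _ _ h => Prod.ext (huw h) (hvw h)
  have hu_card : Fintype.card α ≤ #(univ.image u) * Fintype.card T :=
    (card_le_card_image_mul_card_image hu).trans (Nat.mul_le_mul_left _ (card_le_univ _))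
  have hv_card : Fintype.card α ≤ #(univ.image v) * Fintype.card T :=
    (card_le_card_image_mul_card_image hv).trans (Nat.mul_le_mul_left _ (card_le_univ _))
  refine hpair.symm_of_card_image_le (hw.trans ?_)
  have hq4 : q * q ^ 3 ≤ #(univ.image fun x => (u x, v x)) * q ^ 3 :=
    calc q * q ^ 3 = (q ^ 2) ^ 2 := by ring
      _ ≤ Fintype.card α ^ 2 := Nat.pow_le_pow_left hα 2
      _ ≤ (#(univ.image u) * #(univ.image v)) * Fintype.card T ^ 2 := by
          rw [sq, sq]
          nlinarith
      _ ≤ #(univ.image fun x => (u x, v x)) * q ^ 3 := Nat.mul_le_mul huv.card_image_mul_le hT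
  exact Nat.le_of_mul_le_mul_right hq4 (by positivity)

theorem IsStorageCode.source_eq {N K : ℕ} {G : LabeledGraph N K} {S T : Type}
    {V : Fin N → (Fin K → S) → T} (hV : IsStorageCode G S T V) {i j : Fin N} {k : Fin K}
    (h : G.t i j = some k) {w w' : Fin K → S} (hi : V i w = V i w') (hj : V j w = V j w') :
    w k = w' k := by
  obtain ⟨D, hD⟩ := hV i j k h
  rw [← hD w, ← hD w', hi, hj]

abbrev IsW1W2W1Path {N : ℕ} (G : LabeledGraph N 2) (a b c d : Fin N) : Prop :=
  G.t a b = some 0 ∧ G.t b c = some 1 ∧ G.t c d = some 0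

theorem IsW1W2W1Path.reverse {N : ℕ} {G : LabeledGraph N 2} {a b c d : Fin N}
    (h : IsW1W2W1Path G a b c d) : IsW1W2W1Path G d c b a :=
  ⟨(G.symm d c).trans h.2.2, (G.symm c b).trans h.2.1, (G.symm b a).trans h.1⟩

section FigureRow

variable {X T : Type*} [Fintype X] [Fintype T] [DecidableEq T] {f : Fin 13 → X → T}

theorem fig_row_six_const {q : ℕ}
    (hW2 : ∀ i j, GFig.t i j = some 1 → Injective fun x => (f i x, f j x))
    (hpath : ∀ a b c d, IsW1W2W1Path GFig a b c d → #(univ.image fun x => (f a x, f b x)) = q)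
    (hX : q ^ 2 ≤ Fintype.card X) (hT : Fintype.card T ^ 2 ≤ q ^ 3) (hq : 0 < q) (x y : X) :
    f 6 x = f 6 y := by
  have path := fun a b c d (h : IsW1W2W1Path GFig a b c d) =>
    card_image_eq_and_factorsThrough_and_fibersMeet (hW2 b c h.2.1) (hpath a b c d h).le
      (hpath d c b a h.reverse).le hX
  obtain ⟨-, h40, h01⟩ := path 4 0 1 5 (by decide)
  obtain ⟨-, h51, -⟩ := path 5 1 0 4 (by decide)
  obtain ⟨-, h42, h23⟩ := path 4 2 3 6 (by decide)
  obtain ⟨-, h52, -⟩ := path 5 2 3 6 (by decide)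
  obtain ⟨-, h63, -⟩ := path 6 3 2 4 (by decide)
  obtain ⟨h7, h47, -⟩ := path 4 7 11 10 (by decide)
  obtain ⟨-, h57, -⟩ := path 5 7 11 10 (by decide)
  obtain ⟨-, h67, -⟩ := path 6 7 11 10 (by decide)
  have h745 : (f 7).FactorsThrough fun x => (f 4 x, f 5 x) :=
    factorsThrough_pair_of_pendants (hW2 4 8 (by decide)) (hW2 5 9 (by decide))
      (h01.mono h40 h51) h47 h57 h7.le hX hT hq
  have h62 : (f 6).FactorsThrough (f 2) := fun _ _ h => h67 (h745 (Prod.ext (h42 h) (h52 h)))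
  obtain ⟨z, hzx, hzy⟩ := h23.mono h62 h63 x y
  exact hzx.symm.trans hzy

theorem fig_row_card_le_one
    (hW2 : ∀ i j, GFig.t i j = some 1 → Injective fun x => (f i x, f j x))
    (hpath : ∀ a b c d, IsW1W2W1Path GFig a b c d →
      #(univ.image fun x => (f a x, f b x)) ^ 2 = Fintype.card X)
    (hT : Fintype.card T ^ 4 ≤ Fintype.card X ^ 3) : Fintype.card X ≤ 1 := by
  by_contra! hX
  set q := #(univ.image fun x => (f 4 x, f 0 x))
  have hXq : Fintype.card X = q ^ 2 := (hpath 4 0 1 5 (by decide)).symm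
  have hq : ∀ a b c d, IsW1W2W1Path GFig a b c d → #(univ.image fun x => (f a x, f b x)) = q :=
    fun a b c d h => Nat.pow_left_injective two_ne_zero ((hpath a b c d h).trans hXq)
  have hTq : Fintype.card T ^ 2 ≤ q ^ 3 := by
    rw [← Nat.pow_le_pow_iff_left two_ne_zero, ← pow_mul, ← pow_mul]
    simpa [hXq, ← pow_mul] using hT
  have hq0 : 0 < q := by nlinarith
  have h6 := fig_row_six_const hW2 hq hXq.ge hTq hq0
  have hXT : Fintype.card X ≤ Fintype.card T :=
    Fintype.card_le_of_injective (f 12) fun x y h => hW2 6 12 (by decide) (Prod.ext (h6 x y) h)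
  have hq1 : q * q ^ 3 ≤ 1 * q ^ 3 :=
    calc q * q ^ 3 = Fintype.card X ^ 2 := by rw [hXq]; ring
      _ ≤ Fintype.card T ^ 2 := Nat.pow_le_pow_left hXT 2
      _ ≤ 1 * q ^ 3 := by rwa [one_mul]
  have := Nat.le_of_mul_le_mul_right hq1 (by positivity)
  nlinarith

end FigureRow

/-- every storage code over the graph of Fig. 7 with `|S| ≥ 2` satisfies
`|S|³ < |T|⁴`, i.e. symbol rate strictly below `4/3`. -/
theorem fig_graph_rate_lt_four_thirds (S T : Type) [Fintype S] [Fintype T]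
    (V : Fin 13 → (Fin 2 → S) → T) (hV : IsStorageCode GFig S T V)
    (hS : 2 ≤ Fintype.card S) :
    Fintype.card S ^ 3 < Fintype.card T ^ 4 := by
  classical
  by_contra! hrate
  obtain ⟨r₀⟩ : Nonempty S := Fintype.card_pos_iff.1 (by omega)
  have hW2 : ∀ {i j}, GFig.t i j = some 1 → ∀ r,
      Injective fun x => (V i ![r, x], V j ![r, x]) :=
    fun h _ _ _ hx => hV.source_eq h (congrArg Prod.fst hx) (congrArg Prod.snd hx)
  have hrow := fig_row_card_le_one (f := fun i x => V i ![r₀, x]) (fun _ _ h => hW2 h r₀)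
    (fun _ _ _ _ h => sq_card_image_pair_eq_of_pow_four_le (fun _ _ _ _ => hV.source_eq h.1)
      (fun _ _ _ _ => hV.source_eq h.2.2) (fun _ => hW2 h.2.1 _) (by rwa [← pow_succ]) r₀) hrate
  omega
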